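/- arXiv:math/0404400 — 3 statements merged into one kernel-verified Lean document; each statement's English description precedes it below -/
import Mathlib

section
/- Let p be a prime and let E(t) = exp(∑_{i=0}^∞ t^{p^i}/p^i) be the Artin-Hasse exponential series. Then E(t) has all coefficients in the p-adic integers Z_p. -/
/-!
Dieudonné–Dwork. Since `p · ∑ t^{p^i}/p^i = ∑ t^{p^{i+1}}/p^i + p t`, the series satisfies
`E(t)^p = E(t^p) · exp(p t)`, and `exp(p t) ≡ 1 mod p` because `v_p(n!) < n`. If the
coefficients `a_m` of `E` are integral for `m < n` and `f` is the truncation of `E` below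
degree `n`, comparing the coefficients of `t^n` gives `p a_n ≡ f(t^p)_n - (f(t)^p)_n mod p`,
which vanishes mod `p` by the Frobenius congruence `f(t)^p ≡ f(t^p)` in `ℤ_p[t]`; hence
`a_n ∈ ℤ_p`.
-/

noncomputable def expOf {R : Type*} [CommRing R] [Algebra ℚ R] (f : PowerSeries R) :
    PowerSeries R :=
  PowerSeries.mk fun n => ∑ k ∈ Finset.range (n + 1),
    algebraMap ℚ R (1 / (k.factorial : ℚ)) * PowerSeries.coeff n (f ^ k)

open scoped Classical in
/-- The logarithm of the Artin–Hasse series: `∑_{i≥0} t^{p^i}/p^i`. -/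
noncomputable def AHlog (p : ℕ) (R : Type*) [CommRing R] [Algebra ℚ R] : PowerSeries R :=
  PowerSeries.mk fun n =>
    if h : ∃ i : ℕ, n = p ^ i then algebraMap ℚ R (((p : ℚ) ^ h.choose)⁻¹) else 0

/-- The Artin–Hasse exponential series `E(t) = exp(∑_{i≥0} t^{p^i}/p^i)`. -/
noncomputable def AH (p : ℕ) (R : Type*) [CommRing R] [Algebra ℚ R] : PowerSeries R :=
  expOf (AHlog p R)

/-- `ord_p`, the `p`-adic valuation attached to the norm, normalized by `ordp p p = 1`. -/
noncomputable def ordp (p : ℕ) {K : Type*} [NormedField K] (x : K) : ℝ :=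
  -Real.logb p ‖x‖

/-- Evaluation of the Artin–Hasse series at an element of a normed `ℚ_p`-algebra. -/
noncomputable def AHeval (p : ℕ) [Fact p.Prime] {K : Type*} [NormedField K]
    [Algebra ℚ_[p] K] (x : K) : K :=
  ∑' n : ℕ, algebraMap ℚ_[p] K (PowerSeries.coeff n (AH p ℚ_[p])) * x ^ n

open PowerSeries

theorem PowerSeries.eq_of_derivative_eq_mul {R : Type*} [CommRing R] [IsAddTorsionFree R]
    {F G h : R⟦X⟧} (hF : d⁄dX R F = F * h) (hG : d⁄dX R G = G * h) (hGu : IsUnit G)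
    (hc : constantCoeff F = constantCoeff G) : F = G := by
  obtain ⟨u, rfl⟩ := hGu
  have hquot : F * ↑u⁻¹ = 1 := by
    refine derivative.ext ?_ ?_
    · simp only [Derivation.leibniz, derivative_inv, hF, hG, smul_eq_mul, derivative_one]
      linear_combination -(F * ↑u⁻¹ * h) * u.inv_mul
    · rw [map_mul, hc, ← map_mul, u.mul_inv, map_one]
  rw [← mul_one F, ← u.inv_mul, ← mul_assoc, hquot, one_mul]

section ExpOf

variable {R : Type*} [CommRing R] [Algebra ℚ R]

theorem constantCoeff_expOf (f : R⟦X⟧) : constantCoeff (expOf f) = 1 := by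
  rw [← coeff_zero_eq_constantCoeff_apply, expOf, coeff_mk]
  simp

theorem expOf_eq_subst {f : R⟦X⟧} (hf : constantCoeff f = 0) :
    expOf f = (exp R).subst f := by
  ext n
  rw [expOf, coeff_mk, coeff_subst' (HasSubst.of_constantCoeff_zero' hf),
    finsum_eq_sum_of_support_subset (s := Finset.range (n + 1))]
  · simp [coeff_exp]
  · intro k hk
    by_contra hkn
    simp only [Finset.coe_range, Set.mem_Iio, not_lt] at hkn
    have hzero : coeff n (f ^ k) = 0 :=
      X_pow_dvd_iff.mp (pow_dvd_pow_of_dvd (X_dvd_iff.mpr hf) k) n (by omega)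
    exact hk (show coeff k (exp R) • coeff n (f ^ k) = 0 by rw [hzero, smul_zero])

theorem derivative_expOf {f : R⟦X⟧} (hf : constantCoeff f = 0) :
    d⁄dX R (expOf f) = expOf f * d⁄dX R f := by
  rw [expOf_eq_subst hf, derivative_subst (HasSubst.of_constantCoeff_zero' hf), derivative_exp]

theorem expOf_add {f g : R⟦X⟧} (hf : constantCoeff f = 0) (hg : constantCoeff g = 0) :
    expOf (f + g) = expOf f * expOf g := by
  have := IsAddTorsionFree.of_module_rat R
  refine eq_of_derivative_eq_mul (derivative_expOf (by simp [hf, hg])) ?_ ?_ ?_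
  · rw [Derivation.leibniz, derivative_expOf hf, derivative_expOf hg, map_add, smul_eq_mul,
      smul_eq_mul]
    ring
  · exact isUnit_iff_constantCoeff.mpr (by simp [constantCoeff_expOf])
  · simp [constantCoeff_expOf]

theorem expOf_zero : expOf (0 : R⟦X⟧) = 1 := by
  ext n
  cases n <;> simp [expOf, Finset.sum_range_succ', coeff_one]

theorem expOf_nsmul {f : R⟦X⟧} (hf : constantCoeff f = 0) (m : ℕ) :
    expOf (m • f) = expOf f ^ m := by
  induction m with
  | zero => rw [zero_smul, expOf_zero, pow_zero]
  | succ m ih => rw [succ_nsmul, expOf_add (by simp [hf]) hf, ih, pow_succ]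

theorem expand_expOf (p : ℕ) (hp : p ≠ 0) {f : R⟦X⟧} (hf : constantCoeff f = 0) :
    expand p hp (expOf f) = expOf (expand p hp f) := by
  rw [expOf_eq_subst hf, expOf_eq_subst (by rwa [constantCoeff_expand])]
  exact expand_subst p hp (HasSubst.of_constantCoeff_zero' hf) _

theorem expOf_smul_X (c : R) : expOf (c • X : R⟦X⟧) = rescale c (exp R) := by
  rw [expOf_eq_subst (by simp), rescale_eq_subst]

end ExpOf

section ArtinHasse

variable (p : ℕ) {R : Type*} [CommRing R] [Algebra ℚ R]

theorem coeff_AHlog_pow (hp : 1 < p) (i : ℕ) :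
    coeff (p ^ i) (AHlog p R) = algebraMap ℚ R ((p : ℚ) ^ i)⁻¹ := by
  have h : ∃ j, p ^ i = p ^ j := ⟨i, rfl⟩
  rw [AHlog, coeff_mk, dif_pos h, (Nat.pow_right_injective hp h.choose_spec).symm]

theorem coeff_AHlog_of_forall_ne {n : ℕ} (h : ∀ i, n ≠ p ^ i) : coeff n (AHlog p R) = 0 := by
  rw [AHlog, coeff_mk, dif_neg (by simpa using h)]

theorem constantCoeff_AHlog (hp : p ≠ 0) : constantCoeff (AHlog p R) = 0 := by
  rw [← coeff_zero_eq_constantCoeff_apply,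
    coeff_AHlog_of_forall_ne p fun i => (pow_ne_zero i hp).symm]

theorem nsmul_AHlog (hp : 1 < p) :
    p • AHlog p R = expand p (Nat.zero_lt_of_lt hp).ne' (AHlog p R) + (p : R) • X := by
  ext n
  rw [map_add, map_nsmul, coeff_expand, coeff_smul, coeff_X, nsmul_eq_mul]
  by_cases h : ∃ i, n = p ^ i
  · obtain ⟨i, rfl⟩ := h
    cases i with
    | zero =>
      have h0 := coeff_AHlog_pow p (R := R) hp 0
      rw [pow_zero] at h0 ⊢
      rw [h0, if_neg (by rw [Nat.dvd_one]; omega)]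
      simp
    | succ i =>
      have hdiv : p ^ (i + 1) / p = p ^ i := by
        rw [pow_succ, Nat.mul_div_cancel _ (by omega)]
      rw [if_pos (dvd_pow_self p i.succ_ne_zero), hdiv,
        if_neg (Nat.one_lt_pow i.succ_ne_zero hp).ne', coeff_AHlog_pow p hp, coeff_AHlog_pow p hp,
        smul_zero, add_zero, ← map_natCast (algebraMap ℚ R), ← map_mul]
      congr 1
      field_simp
      ring
  · simp only [not_exists] at h
    have h1 : n ≠ 1 := h 0
    rw [coeff_AHlog_of_forall_ne p h, mul_zero, if_neg h1, smul_zero, add_zero]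
    split_ifs with hdvd
    · obtain ⟨m, rfl⟩ := hdvd
      rw [Nat.mul_div_cancel_left m (by omega)]
      exact (coeff_AHlog_of_forall_ne p fun i hi => h (i + 1) (by rw [hi, pow_succ, mul_comm])).symm
    · rfl

theorem AH_pow (hp : 1 < p) :
    AH p R ^ p = expand p (Nat.zero_lt_of_lt hp).ne' (AH p R) * rescale (p : R) (exp R) := by
  have hL := constantCoeff_AHlog p (R := R) (Nat.zero_lt_of_lt hp).ne'
  rw [AH, ← expOf_nsmul hL, nsmul_AHlog p hp, expOf_add (by rwa [constantCoeff_expand]) (by simp),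
    expand_expOf _ _ hL, expOf_smul_X]

end ArtinHasse

theorem PowerSeries.coeff_pow_add_of_X_pow_dvd {R : Type*} [CommRing R] {T D : R⟦X⟧} {n : ℕ}
    (hn : n ≠ 0) (hT : constantCoeff T = 1) (hD : X ^ n ∣ D) (k : ℕ) :
    coeff n ((T + D) ^ k) = coeff n (T ^ k) + k * coeff n D := by
  obtain ⟨E, rfl⟩ := hD
  have hTD : constantCoeff (T + X ^ n * E) = 1 := by simp [hT, hn]
  rw [← sub_eq_iff_eq_add', ← map_sub, ← geom_sum₂_mul, add_sub_cancel_left, mul_left_comm,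
    coeff_X_pow_mul', if_pos le_rfl, coeff_X_pow_mul', if_pos le_rfl, Nat.sub_self,
    coeff_zero_eq_constantCoeff_apply, coeff_zero_eq_constantCoeff_apply, map_mul]
  simp only [map_sum, map_mul, map_pow, hTD, hT, one_pow, mul_one, Finset.sum_const,
    Finset.card_range, nsmul_eq_mul]

theorem PowerSeries.norm_coeff_mul_le {K : Type*} [SeminormedRing K] [IsUltrametricDist K]
    {A B : K⟦X⟧} {n : ℕ} {a b : ℝ} (hA : ∀ i ≤ n, ‖coeff i A‖ ≤ a)
    (hB : ∀ j ≤ n, ‖coeff j B‖ ≤ b) : ‖coeff n (A * B)‖ ≤ a * b := by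
  have ha : 0 ≤ a := (norm_nonneg _).trans (hA 0 n.zero_le)
  have hb : 0 ≤ b := (norm_nonneg _).trans (hB 0 n.zero_le)
  rw [coeff_mul]
  refine IsUltrametricDist.norm_sum_le_of_forall_le_of_nonneg (mul_nonneg ha hb) fun q hq => ?_
  have hq := Finset.HasAntidiagonal.mem_antidiagonal.mp hq
  exact (norm_mul_le _ _).trans (mul_le_mul (hA _ (by omega)) (hB _ (by omega)) (norm_nonneg _) ha)

theorem PowerSeries.coeff_pow_eq_coeff_trunc_pow_add {R : Type*} [CommRing R] {F : R⟦X⟧}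
    (hF : constantCoeff F = 1) {n : ℕ} (hn : n ≠ 0) (k : ℕ) :
    coeff n (F ^ k) = (trunc n F ^ k).coeff n + k * coeff n F := by
  have hT : constantCoeff (trunc n F : R⟦X⟧) = 1 := by
    rw [← coeff_zero_eq_constantCoeff_apply, Polynomial.coeff_coe, coeff_trunc,
      if_pos (Nat.pos_of_ne_zero hn), coeff_zero_eq_constantCoeff_apply, hF]
  have hdvd : X ^ n ∣ F - (trunc n F : R⟦X⟧) := X_pow_dvd_iff.mpr fun m hm => by
    rw [map_sub, Polynomial.coeff_coe, coeff_trunc, if_pos hm, sub_self]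
  have := coeff_pow_add_of_X_pow_dvd hn hT hdvd k
  rwa [add_sub_cancel, ← Polynomial.coe_pow, Polynomial.coeff_coe, map_sub, Polynomial.coeff_coe,
    coeff_trunc, if_neg (lt_irrefl n), sub_zero] at this

section Padic

variable {p : ℕ} [hp : Fact p.Prime]

theorem PadicInt.norm_coeff_pow_sub_expand_le (f : Polynomial ℤ_[p]) (n : ℕ) :
    ‖(f ^ p - Polynomial.expand ℤ_[p] p f).coeff n‖ ≤ (p : ℝ)⁻¹ := by
  have hmod : toZMod ((f ^ p - Polynomial.expand ℤ_[p] p f).coeff n) = 0 := by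
    rw [← Polynomial.coeff_map, Polynomial.map_sub, Polynomial.map_pow, Polynomial.map_expand,
      ZMod.expand_card, sub_self, Polynomial.coeff_zero]
  have hlt : ‖(f ^ p - Polynomial.expand ℤ_[p] p f).coeff n‖ < 1 := by
    rw [← mem_nonunits, ← IsLocalRing.mem_maximalIdeal, ← ker_toZMod]
    exact hmod
  rw [← zpow_neg_one]
  exact (norm_le_pow_iff_norm_lt_pow_add_one _ (-1)).mpr (by simpa using hlt)

theorem Padic.norm_coeff_pow_sub_expand_le {f : Polynomial ℚ_[p]}
    (hf : ∀ m, ‖f.coeff m‖ ≤ 1) (n : ℕ) :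
    ‖(f ^ p - Polynomial.expand ℚ_[p] p f).coeff n‖ ≤ (p : ℝ)⁻¹ := by
  obtain ⟨g, rfl⟩ : f ∈ Polynomial.lifts (PadicInt.Coe.ringHom (p := p)) :=
    (Polynomial.lifts_iff_coeff_lifts f).mpr fun m => ⟨⟨_, hf m⟩, rfl⟩
  rw [Polynomial.coe_mapRingHom, ← Polynomial.map_expand, ← Polynomial.map_pow,
    ← Polynomial.map_sub, Polynomial.coeff_map]
  exact PadicInt.norm_coeff_pow_sub_expand_le g n

theorem Padic.norm_coeff_rescale_exp_sub_one_le (n : ℕ) :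
    ‖coeff n (rescale (p : ℚ_[p]) (exp ℚ_[p]) - 1)‖ ≤ (p : ℝ)⁻¹ := by
  rw [map_sub, coeff_rescale, coeff_exp, coeff_one]
  rcases Nat.eq_zero_or_pos n with rfl | hn
  · simp
  have hv := padicValNat_factorial_lt_of_ne_zero p hn.ne'
  rw [if_neg hn.ne', sub_zero, eq_ratCast, Rat.cast_div, Rat.cast_one, Rat.cast_natCast,
    norm_mul, norm_div, norm_one, Padic.norm_p_pow,
    Padic.norm_eq_zpow_neg_valuation (Nat.cast_ne_zero.mpr n.factorial_ne_zero),
    Padic.valuation_natCast, one_div, ← zpow_neg,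
    ← zpow_add₀ (by exact_mod_cast hp.out.ne_zero), ← zpow_neg_one]
  exact zpow_le_zpow_right₀ (by exact_mod_cast hp.out.one_le) (by omega)

theorem Padic.norm_coeff_le_one_of_pow_eq_expand_mul {F G : ℚ_[p]⟦X⟧}
    (hF : constantCoeff F = 1) (hFG : F ^ p = expand p hp.out.ne_zero F * G)
    (hG : ∀ n, ‖coeff n (G - 1)‖ ≤ (p : ℝ)⁻¹) (n : ℕ) : ‖coeff n F‖ ≤ 1 := by
  induction n using Nat.strong_induction_on with
  | _ n ih =>
  rcases Nat.eq_zero_or_pos n with rfl | hn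
  · simp [hF]
  set f := trunc n F
  have hf : ∀ m, ‖f.coeff m‖ ≤ 1 := fun m => by
    rw [coeff_trunc]
    split_ifs with hm
    · exact ih m hm
    · simp
  have hdiv_lt : ∀ i ≤ n, i / p < n := fun i hi =>
    (Nat.div_le_div_right hi).trans_lt (Nat.div_lt_self hn hp.out.one_lt)
  have hexpand : ∀ i ≤ n, ‖coeff i (expand p hp.out.ne_zero F)‖ ≤ 1 := fun i hi => by
    rw [coeff_expand]
    split_ifs
    · exact ih _ (hdiv_lt i hi)
    · simp
  have hexpand_n :
      coeff n (expand p hp.out.ne_zero F) = (Polynomial.expand ℚ_[p] p f).coeff n := by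
    rw [coeff_expand, Polynomial.coeff_expand hp.out.pos, coeff_trunc, if_pos (hdiv_lt n le_rfl)]
  have hpow : coeff n (F ^ p) = (f ^ p).coeff n + p * coeff n F :=
    coeff_pow_eq_coeff_trunc_pow_add hF hn.ne' p
  have hkey : (p : ℚ_[p]) * coeff n F =
      -(f ^ p - Polynomial.expand ℚ_[p] p f).coeff n +
        coeff n (expand p hp.out.ne_zero F * (G - 1)) := by
    rw [mul_sub, mul_one, map_sub, ← hFG, hpow, hexpand_n, Polynomial.coeff_sub]
    ring
  have hbound : ‖(p : ℚ_[p]) * coeff n F‖ ≤ (p : ℝ)⁻¹ := by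
    rw [hkey]
    refine (IsUltrametricDist.norm_add_le_max _ _).trans (max_le ?_ ?_)
    · rw [norm_neg]
      exact Padic.norm_coeff_pow_sub_expand_le hf n
    · simpa using norm_coeff_mul_le hexpand fun j _ => hG j
  rw [norm_mul, Padic.norm_p] at hbound
  exact le_of_mul_le_mul_left (by simpa using hbound) (by simp [hp.out.pos])

end Padic

/-- The Artin–Hasse exponential series `E(t) = exp(∑_{i≥0} t^{p^i}/p^i)` has all of its
coefficients in the `p`-adic integers `ℤ_p`. -/
theorem artin_hasse_coeff_integral (p : ℕ) [Fact p.Prime] (n : ℕ) :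
    ‖PowerSeries.coeff n (AH p ℚ_[p])‖ ≤ 1 :=
  Padic.norm_coeff_le_one_of_pow_eq_expand_mul (constantCoeff_expOf _)
    (AH_pow p (Fact.out : p.Prime).one_lt) Padic.norm_coeff_rescale_exp_sub_one_le n
end

section
/- Let Δ ⊂ Q^n be an n-dimensional convex polytope containing the origin, with degree function deg on L(Δ) (the integral points of the cone over Δ) and denominator D = D(Δ). Define W_Δ(k) = #{u ∈ L(Δ) : deg(u) = k/D} and h_Δ(k) by ∑_k h_Δ(k) t^k = (1−t)^n ∑_k W_Δ(k) t^k. Then for every integer j with 1 ≤ j ≤ n+1, (1/D)·∑_{k=0}^{jD} k·W_Δ(k) ≥ (j−1)·∑_{k=0}^{jD} W_Δ(k). -/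
/-!
Writing `n = r + 1`, inverting `(1 - X)^n` makes `W` the convolution of `h` with
`m ↦ C(m + r, r)`. By the hockey-stick identities a single term `h i` contributes
`C(N - i + n, n)` to `∑_{k ≤ N} W k` and `(n N + i) C(N - i + n, n) / (n + 1)` to
`∑_{k ≤ N} k W k`, so `h ≥ 0` gives `(n + 1) ∑_{k ≤ N} k W k ≥ n N ∑_{k ≤ N} W k`.
At `N = j D` this is the claim, because `n j D / (n + 1) ≥ (j - 1) D` exactly when `j ≤ n + 1`.
-/

open Finset PowerSeries

namespace Nat

theorem sum_range_mul_add_choose (M r : ℕ) :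
    ∑ m ∈ range (M + 1), m * (m + r).choose r = (r + 1) * (M + r + 1).choose (r + 2) := by
  induction M with
  | zero => simp
  | succ M ih =>
    have pascal := choose_succ_succ' (M + r + 1) (r + 1)
    have absorb := choose_succ_right_eq (M + r + 1) r
    rw [show M + r + 1 - r = M + 1 by omega] at absorb
    rw [sum_range_succ, ih, show M + 1 + r = M + r + 1 by omega, pascal]
    linarith

theorem succ_succ_mul_sum_range_add_mul_add_choose (i M r : ℕ) :
    (r + 2) * ∑ m ∈ range (M + 1), (i + m) * (m + r).choose r
      = ((r + 1) * (i + M) + i) * (M + r + 1).choose (r + 1) := by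
  have absorb := choose_succ_right_eq (M + r + 1) (r + 1)
  rw [show M + r + 1 - (r + 1) = M by omega] at absorb
  simp only [add_mul, sum_add_distrib, ← mul_sum, sum_range_mul_add_choose, sum_range_add_choose]
  linear_combination (r + 1) * absorb

end Nat

theorem Finset.sum_range_sum_antidiagonal {M : Type*} [AddCommMonoid M] (N : ℕ) (F : ℕ → ℕ → M) :
    ∑ k ∈ range (N + 1), ∑ p ∈ antidiagonal k, F p.1 p.2
      = ∑ i ∈ range (N + 1), ∑ m ∈ range (N - i + 1), F i m := by
  simp only [Nat.sum_antidiagonal_eq_sum_range_succ F]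
  rw [sum_comm' (t' := range (N + 1)) (s' := fun i => Ico i (N + 1))]
  · refine sum_congr rfl fun i hi => ?_
    rw [sum_Ico_eq_sum_range, show N + 1 - i = N - i + 1 by simp at hi; omega]
    simp
  · simp only [mem_range, mem_Ico]
    omega

theorem PowerSeries.coeff_eq_sum_antidiagonal_choose_of_mk_eq_one_sub_pow_mul {R : Type*}
    [CommRing R] {r : ℕ} {h W : ℕ → R} (hrel : mk h = (1 - X) ^ (r + 1) * mk W) (k : ℕ) :
    W k = ∑ p ∈ antidiagonal k, h p.1 * (p.2 + r).choose r := by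
  have hW : mk W = mk h * mk fun n => ((r + n).choose r : R) := by
    rw [hrel, mul_comm, ← mul_assoc, mk_add_choose_mul_one_sub_pow_eq_one, one_mul]
  simpa [coeff_mul, add_comm r] using congrArg (coeff k) hW

section Convolution

variable {R : Type*} [CommSemiring R] {r : ℕ} {h W : ℕ → R}

theorem sum_range_eq_sum_mul_choose
    (hconv : ∀ k, W k = ∑ p ∈ antidiagonal k, h p.1 * (p.2 + r).choose r) (N : ℕ) :
    ∑ k ∈ range (N + 1), W k = ∑ i ∈ range (N + 1), h i * (N - i + r + 1).choose (r + 1) := by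
  simp only [hconv, sum_range_sum_antidiagonal N fun i m => h i * ((m + r).choose r : R),
    ← mul_sum, ← Nat.cast_sum, Nat.sum_range_add_choose]

theorem succ_succ_mul_sum_range_mul_eq_sum
    (hconv : ∀ k, W k = ∑ p ∈ antidiagonal k, h p.1 * (p.2 + r).choose r) (N : ℕ) :
    (r + 2) * ∑ k ∈ range (N + 1), k * W k
      = ∑ i ∈ range (N + 1), h i * (((r + 1) * N + i) * (N - i + r + 1).choose (r + 1)) := by
  have hsum : ∑ k ∈ range (N + 1), k * W k
      = ∑ k ∈ range (N + 1), ∑ p ∈ antidiagonal k, h p.1 * ((p.1 + p.2) * (p.2 + r).choose r) := by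
    refine sum_congr rfl fun k _ => ?_
    rw [hconv, mul_sum]
    refine sum_congr rfl fun p hp => ?_
    rw [← mem_antidiagonal.mp hp]
    push_cast
    ring
  rw [hsum, sum_range_sum_antidiagonal N fun i m => h i * ((i + m) * (m + r).choose r : R),
    mul_sum]
  refine sum_congr rfl fun i hi => ?_
  have hiN : i + (N - i) = N := by simp at hi; omega
  rw [← mul_sum, mul_left_comm]
  congr 1
  have block := Nat.succ_succ_mul_sum_range_add_mul_add_choose i (N - i) r
  rw [hiN] at block
  have := congrArg (Nat.cast (R := R)) block
  push_cast at this ⊢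
  exact this

theorem succ_mul_mul_sum_range_le_succ_succ_mul_sum_range_mul [PartialOrder R] [IsOrderedRing R]
    (hconv : ∀ k, W k = ∑ p ∈ antidiagonal k, h p.1 * (p.2 + r).choose r) (hpos : ∀ i, 0 ≤ h i)
    (N : ℕ) :
    (r + 1) * N * ∑ k ∈ range (N + 1), W k ≤ (r + 2) * ∑ k ∈ range (N + 1), k * W k := by
  rw [succ_succ_mul_sum_range_mul_eq_sum hconv, sum_range_eq_sum_mul_choose hconv, mul_sum]
  refine sum_le_sum fun i _ => ?_
  rw [mul_left_comm]
  gcongr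
  · exact hpos i
  · exact le_add_of_nonneg_right i.cast_nonneg

end Convolution

theorem hodge_polygon_weight_bound_general (n D : ℕ) (hn : 1 ≤ n) (hD : 1 ≤ D)
    (W : ℕ → ℕ) (h : ℕ → ℤ)
    (hrel : PowerSeries.mk (fun k => (h k : ℚ))
      = (1 - PowerSeries.X) ^ n * PowerSeries.mk fun k => (W k : ℚ))
    (hpos : ∀ k : ℕ, 0 ≤ h k) :
    ∀ j : ℕ, 1 ≤ j → j ≤ n + 1 →
      ((j : ℚ) - 1) * ∑ k ∈ Finset.range (j * D + 1), (W k : ℚ)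
        ≤ (1 / (D : ℚ)) * ∑ k ∈ Finset.range (j * D + 1), (k : ℚ) * (W k : ℚ) := by
  intro j _ hjn
  obtain ⟨r, rfl⟩ : ∃ r, n = r + 1 := ⟨n - 1, by omega⟩
  have key := succ_mul_mul_sum_range_le_succ_succ_mul_sum_range_mul
    (coeff_eq_sum_antidiagonal_choose_of_mk_eq_one_sub_pow_mul hrel) (by exact_mod_cast hpos)
    (j * D)
  set S := ∑ k ∈ range (j * D + 1), (W k : ℚ)
  set T := ∑ k ∈ range (j * D + 1), (k : ℚ) * (W k : ℚ)
  have hS : 0 ≤ S := sum_nonneg fun k _ => (W k).cast_nonneg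
  have hD0 : (0 : ℚ) < D := by exact_mod_cast hD
  have hj : ((j : ℚ) - 1) * (r + 2) ≤ (r + 1) * j := by
    have : (j : ℚ) ≤ r + 2 := by exact_mod_cast hjn
    linarith
  rw [one_div_mul_eq_div, le_div_iff₀ hD0]
  refine le_of_mul_le_mul_left ?_ (by positivity : (0 : ℚ) < r + 2)
  calc (r + 2) * ((j - 1) * S * D) = ((j - 1) * (r + 2)) * (D * S) := by ring
    _ ≤ ((r + 1) * j) * (D * S) := by gcongr
    _ = (r + 1) * ↑(j * D) * S := by push_cast; ring
    _ ≤ (r + 2) * T := key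

/-- Let `Δ ⊂ ℚ^n` be an `n`-dimensional polytope containing the origin, with degree function
`deg` on the lattice points `L(Δ)` of the cone over `Δ` and denominator `D = D(Δ)`.  Let
`W(k) = #{u ∈ L(Δ) : deg u = k/D}` and define `h` by `∑ h(k)t^k = (1−t)^n ∑ W(k)t^k`; by
Kouchnirenko's lemma `h` is a polynomial of degree `≤ n` with nonnegative coefficients (assumed
here).  Then for every `1 ≤ j ≤ n+1`,
`(1/D)·∑_{k=0}^{jD} k·W(k) ≥ (j−1)·∑_{k=0}^{jD} W(k)`. -/
theorem hodge_polygon_weight_bound (n D : ℕ) (hn : 1 ≤ n) (hD : 1 ≤ D)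
    (L : Set (Fin n → ℤ)) (deg : (Fin n → ℤ) → ℚ)
    (W : ℕ → ℕ) (h : ℕ → ℤ)
    (hW : ∀ k : ℕ, W k = Nat.card {u : Fin n → ℤ // u ∈ L ∧ deg u = (k : ℚ) / D})
    (hrel : PowerSeries.mk (fun k => (h k : ℚ))
      = (1 - PowerSeries.X) ^ n * PowerSeries.mk fun k => (W k : ℚ))
    (hdeg : ∀ k : ℕ, n < k → h k = 0)
    (hpos : ∀ k : ℕ, 0 ≤ h k) :
    ∀ j : ℕ, 1 ≤ j → j ≤ n + 1 →
      ((j : ℚ) - 1) * ∑ k ∈ Finset.range (j * D + 1), (W k : ℚ)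
        ≤ (1 / (D : ℚ)) * ∑ k ∈ Finset.range (j * D + 1), (k : ℚ) * (W k : ℚ) :=
  hodge_polygon_weight_bound_general n D hn hD W h hrel hpos
end

section
/- Let W: N → N be given by W(i) = ∑_{k=0}^{⌊i/D⌋} h(i−Dk)·C(n−1+k, n−1) for a finitely supported function h: N → Z. Then for real x → ∞, ∑_{i ≤ Dx} (x − i/D)·W(i) = (∑_j h(j))·x^{n+1}/(n+1)! + (∑_j h(j)(n/2 − j/D))·x^n/n! + O(x^{n-1}). -/
open Filter Finset Asymptotics Polynomial

/-!
Write `m = n - 1`. Swapping the order of summation turns the left side into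
`∑ⱼ h j · S(x - j/D)` with `S(y) = ∑_{k ≤ y} (y - k) C(m+k, m)`, and Pascal's rule shows that `S`
is the piecewise linear interpolation, at the integers, of `P(t) = t (t+1) ⋯ (t+m+1) / (m+2)!`.
With `θ = y - ⌊y⌋ ∈ [0, 1)`, expanding `P(y - θ)` and `P(y - θ + 1)` to two orders in `y`, the
`θ`-dependent subleading terms cancel in the interpolation, leaving
`S(x - c) = x^(m+2)/(m+2)! + ((m+1)/2 - c) x^(m+1)/(m+1)! + O(x^m)`.
-/

theorem sum_range_sub_mul_choose (m M : ℕ) (y : ℝ) :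
    ∑ k ∈ range (M + 1), (y - k) * ((m + k).choose m : ℝ) =
      (M + 1 - y) * ((M + m + 1).choose (m + 2) : ℝ)
        + (y - M) * ((M + m + 2).choose (m + 2) : ℝ) := by
  induction M with
  | zero => simp
  | succ M ih =>
    rw [sum_range_succ, ih]
    have h₁ : (M + m + 2 + 1).choose (m + 2) =
        (M + m + 2).choose (m + 1) + (M + m + 2).choose (m + 2) := Nat.choose_succ_succ' _ _
    have h₂ : (M + m + 2).choose (m + 2) =
        (M + m + 1).choose (m + 1) + (M + m + 1).choose (m + 2) := Nat.choose_succ_succ' _ _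
    have h₃ : (M + m + 2).choose (m + 1) =
        (M + m + 1).choose m + (M + m + 1).choose (m + 1) := Nat.choose_succ_succ' _ _
    rw [show M + 1 + m + 1 = M + m + 1 + 1 by ring, show M + 1 + m + 2 = M + m + 2 + 1 by ring,
      show m + (M + 1) = M + m + 1 by ring, h₁, h₃, h₂]
    push_cast
    ring

theorem ascPochhammer_eval_add_sub_isBigO {c : ℝ → ℝ} (hc : c =O[atTop] fun _ => (1 : ℝ)) (k : ℕ) :
    (fun x => (ascPochhammer ℝ (k + 2)).eval (x + c x)
        - (x ^ (k + 2) + (k + 2) * (c x + (k + 1) / 2) * x ^ (k + 1)))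
      =O[atTop] fun x => x ^ k := by
  induction k with
  | zero =>
    have hc1 : (fun x => c x + 1) =O[atTop] fun _ => (1 : ℝ) := hc.add (isBigO_refl _ _)
    refine (hc.mul hc1).congr (fun x => ?_) (fun x => ?_)
    · simp only [ascPochhammer_succ_eval, ascPochhammer_zero, eval_one]
      push_cast
      ring
    · simp
  | succ k ih =>
    set E := fun x => (ascPochhammer ℝ (k + 2)).eval (x + c x)
        - (x ^ (k + 2) + (k + 2) * (c x + (k + 1) / 2) * x ^ (k + 1))
    have hb : (fun x => c x + (k + 2)) =O[atTop] fun _ => (1 : ℝ) := hc.add (isBigO_const_one _ _ _)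
    have hs : (fun x => (k + 2) * (c x + (k + 1) / 2) * (c x + (k + 2))) =O[atTop]
        fun _ => (1 : ℝ) :=
      ((isBigO_const_one _ _ _).mul (hc.add (isBigO_const_one _ _ _))).mul hb
        |>.congr_right (by simp)
    have hpow : (fun x : ℝ => x ^ k) =O[atTop] fun x => x ^ (k + 1) :=
      (isLittleO_pow_pow_atTop_of_lt k.lt_succ_self).isBigO
    have h₁ : (fun x => E x * x) =O[atTop] fun x => x ^ (k + 1) :=
      (ih.mul (isBigO_refl _ _)).congr_right (fun x => by ring)
    have h₂ : (fun x => E x * (c x + (k + 2))) =O[atTop] fun x => x ^ (k + 1) :=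
      (ih.trans hpow).mul hb |>.congr_right (by simp)
    have h₃ : (fun x => (k + 2) * (c x + (k + 1) / 2) * (c x + (k + 2)) * x ^ (k + 1)) =O[atTop]
        fun x => x ^ (k + 1) :=
      hs.mul (isBigO_refl _ _) |>.congr_right (by simp)
    refine ((h₁.add h₂).add h₃).congr_left (fun x => ?_)
    simp only [E, ascPochhammer_succ_eval (k + 2)]
    push_cast
    ring

noncomputable def weightedBinomSum (m : ℕ) (y : ℝ) : ℝ :=
  ∑ k ∈ range (⌊y⌋₊ + 1), (y - k) * ((m + k).choose m : ℝ)

theorem factorial_mul_weightedBinomSum (m : ℕ) (y : ℝ) :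
    ((m + 2).factorial : ℝ) * weightedBinomSum m y =
      (⌊y⌋₊ + 1 - y) * (ascPochhammer ℝ (m + 2)).eval (⌊y⌋₊ : ℝ)
        + (y - ⌊y⌋₊) * (ascPochhammer ℝ (m + 2)).eval ((⌊y⌋₊ : ℝ) + 1) := by
  have hchoose (M : ℕ) : ((M + m + 1).choose (m + 2) : ℝ) =
      (ascPochhammer ℝ (m + 2)).eval (M : ℝ) / (m + 2).factorial := by
    rw [Nat.cast_choose_eq_ascPochhammer_div]
    congr
    omega
  have hfac : ((m + 2).factorial : ℝ) ≠ 0 := by positivity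
  rw [weightedBinomSum, sum_range_sub_mul_choose, hchoose,
    show ⌊y⌋₊ + m + 2 = ⌊y⌋₊ + 1 + m + 1 by ring, hchoose]
  field_simp
  push_cast
  ring

theorem weightedBinomSum_sub_isBigO (m : ℕ) (c : ℝ) :
    (fun x => weightedBinomSum m (x - c)
        - (x ^ (m + 2) / (m + 2).factorial + ((m + 1) / 2 - c) * x ^ (m + 1) / (m + 1).factorial))
      =O[atTop] fun x => x ^ m := by
  set θ : ℝ → ℝ := fun x => x - c - ⌊x - c⌋₊
  have hθ : θ =O[atTop] fun _ => (1 : ℝ) := by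
    refine IsBigO.of_bound 1 ?_
    filter_upwards [eventually_ge_atTop c] with x hx
    have h₀ := Nat.floor_le (sub_nonneg.mpr hx)
    have h₁ := Nat.lt_floor_add_one (x - c)
    rw [Real.norm_eq_abs, abs_le]
    simp only [θ, norm_one]
    constructor <;> linarith
  have hθ' (a : ℝ) : (fun x => a - θ x) =O[atTop] fun _ => (1 : ℝ) :=
    (isBigO_const_one _ _ _).sub hθ
  have hlow := ascPochhammer_eval_add_sub_isBigO (hθ' (-c)) m
  have hhigh := ascPochhammer_eval_add_sub_isBigO (hθ' (1 - c)) m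
  refine ((hθ' 1).mul hlow |>.add (hθ.mul hhigh)
    |>.const_mul_left ((m + 2).factorial : ℝ)⁻¹).congr (fun x => ?_) (fun x => by simp)
  have hfac : ((m + 2).factorial : ℝ) = (m + 2) * (m + 1).factorial := by
    push_cast [Nat.factorial_succ (m + 1)]
    ring
  have hfac₀ : ((m + 1).factorial : ℝ) ≠ 0 := by positivity
  have hM : x + (-c - θ x) = ⌊x - c⌋₊ := by simp only [θ]; ring
  have hM₁ : x + (1 - c - θ x) = ⌊x - c⌋₊ + 1 := by simp only [θ]; ring
  rw [hM, hM₁, eq_sub_iff_add_eq, ← mul_right_inj' (by positivity : ((m + 2).factorial : ℝ) ≠ 0),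
    mul_add, factorial_mul_weightedBinomSum]
  simp only [θ, hfac]
  field_simp
  ring

theorem sum_range_sum_range_div_eq {M : Type*} [AddCommMonoid M] {D : ℕ} (hD : 0 < D) (I : ℕ)
    (g : ℕ → ℕ → M) :
    ∑ i ∈ range (I + 1), ∑ k ∈ range (i / D + 1), g i k =
      ∑ j ∈ range (I + 1), ∑ k ∈ range ((I - j) / D + 1), g (j + D * k) k := by
  rw [sum_sigma', sum_sigma']
  refine sum_nbij' (fun p => ⟨p.1 - D * p.2, p.2⟩) (fun p => ⟨p.1 + D * p.2, p.2⟩)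
    ?_ ?_ ?_ ?_ ?_ <;> rintro ⟨i, k⟩ hp <;>
    simp only [mem_sigma, mem_range, Nat.lt_succ_iff, Nat.le_div_iff_mul_le hD, mul_comm k D]
      at hp ⊢
  · omega
  · omega
  · simp only [Nat.sub_add_cancel hp.2]
  · simp only [Nat.add_sub_cancel]
  · rw [Nat.sub_add_cancel hp.2]

theorem sum_sub_mul_eq_sum_mul_weightedBinomSum {m D N : ℕ} (hD : 0 < D) {h : ℕ → ℤ}
    (hN : ∀ j, N ≤ j → h j = 0) {W : ℕ → ℤ}
    (hW : ∀ i, W i = ∑ k ∈ range (i / D + 1), h (i - D * k) * ((m + k).choose m : ℤ))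
    {x : ℝ} (hx : N ≤ x) :
    ∑ i ∈ range (⌊(D : ℝ) * x⌋₊ + 1), (x - i / D) * (W i : ℝ) =
      ∑ j ∈ range N, (h j : ℝ) * weightedBinomSum m (x - j / D) := by
  have hD' : (0 : ℝ) < D := by exact_mod_cast hD
  set I := ⌊(D : ℝ) * x⌋₊
  have hNI : N ≤ I + 1 := by
    refine (Nat.le_floor ?_).trans I.le_succ
    nlinarith [(Nat.one_le_cast (α := ℝ)).mpr hD, (N.cast_nonneg : (0 : ℝ) ≤ N)]
  have hfloor (j : ℕ) : ⌊x - j / D⌋₊ = (I - j) / D := by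
    rw [show x - j / D = ((D : ℝ) * x - j) / D by field_simp, Nat.floor_div_natCast,
      Nat.floor_sub_natCast]
  simp only [hW, Int.cast_sum, Int.cast_mul, Int.cast_natCast, mul_sum]
  rw [sum_range_sum_range_div_eq hD, ← sum_subset (range_subset_range.mpr hNI)]
  · refine sum_congr rfl fun j _ => ?_
    rw [weightedBinomSum, hfloor, mul_sum]
    refine sum_congr rfl fun k _ => ?_
    rw [Nat.add_sub_cancel]
    push_cast
    field_simp
    ring
  · intro j _ hj
    simp [hN j (by simpa using hj)]

/-- Let `W(i) = ∑_{k=0}^{⌊i/D⌋} h(i−Dk)·C(n−1+k, n−1)` for a finitely supported `h : ℕ → ℤ`.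
Then, as `x → ∞`,
`∑_{i ≤ Dx} (x − i/D)·W(i) = (∑_j h(j))·x^{n+1}/(n+1)! + (∑_j h(j)(n/2 − j/D))·x^n/n! + O(x^{n−1})`. -/
theorem weighted_lattice_sum_asymptotic (n D : ℕ) (hn : 1 ≤ n) (hD : 1 ≤ D)
    (h : ℕ → ℤ) (hfin : ∃ N : ℕ, ∀ j : ℕ, N ≤ j → h j = 0)
    (W : ℕ → ℤ)
    (hW : ∀ i : ℕ, W i = ∑ k ∈ Finset.range (i / D + 1),
        h (i - D * k) * (Nat.choose (n - 1 + k) (n - 1) : ℤ)) :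
    (fun x : ℝ =>
        (∑ i ∈ Finset.range (Nat.floor ((D : ℝ) * x) + 1), (x - (i : ℝ) / D) * (W i : ℝ))
          - ((∑' j : ℕ, (h j : ℝ)) * x ^ (n + 1) / ((n + 1).factorial : ℝ)
            + (∑' j : ℕ, (h j : ℝ) * ((n : ℝ) / 2 - (j : ℝ) / D)) * x ^ n / (n.factorial : ℝ)))
      =O[atTop] fun x : ℝ => x ^ (n - 1) := by
  obtain ⟨m, rfl⟩ : ∃ m, n = m + 1 := ⟨n - 1, by omega⟩
  obtain ⟨N, hN⟩ := hfin
  simp only [Nat.add_sub_cancel] at hW ⊢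
  have hsupp {f : ℕ → ℝ} (hf : ∀ j, h j = 0 → f j = 0) : ∑' j, f j = ∑ j ∈ range N, f j :=
    tsum_eq_sum fun j hj => hf j (hN j (by simpa using hj))
  rw [hsupp (f := fun j => (h j : ℝ)) fun j hj => by simp [hj], hsupp fun j hj => by simp [hj]]
  refine (IsBigO.fun_sum (s := range N) fun (j : ℕ) _ =>
    (weightedBinomSum_sub_isBigO m (j / D)).const_mul_left (h j : ℝ)).congr'
    ?_ EventuallyEq.rfl
  filter_upwards [eventually_ge_atTop (N : ℝ)] with x hx
  rw [sum_sub_mul_eq_sum_mul_weightedBinomSum hD hN hW hx]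
  simp only [sum_mul, sum_div, ← sum_add_distrib, ← sum_sub_distrib]
  refine sum_congr rfl fun j _ => ?_
  push_cast
  ring
end
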